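/- arXiv:1010.2721 — 6 statements merged into one kernel-verified Lean document; each statement's English description precedes it below -/
import Mathlib

section
/- If X(t) is a differentiable curve in V satisfying the Euler equation (dX/dt, Z) = {X, DX, Z} for all Z ∈ V, then the energy (X(t), X(t)) is constant in time. -/
open scoped RealInnerProductSpace

/-- If `X(t)` satisfies the Euler equation `(dX/dt, Z) = {X, DX, Z}` of a
finite-dimensional fluid algebra, then the energy `(X, X)` is constant in time. -/
theorem euler_energy_conserved
    {V : Type*} [NormedAddCommGroup V] [InnerProductSpace ℝ V] [FiniteDimensional ℝ V]
    (tri : V →ₗ[ℝ] V →ₗ[ℝ] V →ₗ[ℝ] ℝ)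
    (htri₁ : ∀ x y z, tri x y z = - tri y x z)
    (htri₂ : ∀ x y z, tri x y z = - tri x z y)
    (link : V →ₗ[ℝ] V →ₗ[ℝ] ℝ)
    (hsymm : ∀ x y, link x y = link y x)
    (hnondeg : ∀ x, (∀ y, link x y = 0) → x = 0)
    (D : V →ₗ[ℝ] V)
    (hD : ∀ x y, ⟪D x, y⟫ = link x y)
    (X X' : ℝ → V)
    (hderiv : ∀ t, HasDerivAt X (X' t) t)
    (heuler : ∀ t, ∀ z : V, ⟪X' t, z⟫ = tri (X t) (D (X t)) z) :
    ∀ s t : ℝ, ⟪X s, X s⟫ = ⟪X t, X t⟫ := by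
  have key : ∀ x y : V, tri x y x = 0 := by
    intro x y
    have h1 : tri x x y = 0 := by have := htri₁ x x y; linarith
    have h2 := htri₂ x y x
    rw [h1] at h2; linarith
  have hzero : ∀ t, ⟪X' t, X t⟫ = 0 := fun t => by
    rw [heuler t (X t), key]
  have hf : ∀ u : ℝ, HasDerivAt (fun u => ⟪X u, X u⟫) 0 u := by
    intro u
    have h := (hderiv u).inner ℝ (hderiv u)
    have hz2 : ⟪X u, X' u⟫ = 0 := by rw [real_inner_comm]; exact hzero u
    simpa [hzero u, hz2] using h
  exact is_const_of_deriv_eq_zero (fun u => (hf u).differentiableAt)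
    (fun u => (hf u).deriv)
end

section
/- If X(t) is a differentiable curve in V satisfying the Euler equation (dX/dt, Z) = {X, DX, Z} for all Z ∈ V, then the helicity (X(t), DX(t)) is constant in time. -/
open scoped RealInnerProductSpace

/-- If `X(t)` satisfies the Euler equation `(dX/dt, Z) = {X, DX, Z}` of a
finite-dimensional fluid algebra, then the helicity `(X, DX)` is constant in time. -/
theorem euler_helicity_conserved
    {V : Type*} [NormedAddCommGroup V] [InnerProductSpace ℝ V] [FiniteDimensional ℝ V]
    (tri : V →ₗ[ℝ] V →ₗ[ℝ] V →ₗ[ℝ] ℝ)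
    (htri₁ : ∀ x y z, tri x y z = - tri y x z)
    (htri₂ : ∀ x y z, tri x y z = - tri x z y)
    (link : V →ₗ[ℝ] V →ₗ[ℝ] ℝ)
    (hsymm : ∀ x y, link x y = link y x)
    (hnondeg : ∀ x, (∀ y, link x y = 0) → x = 0)
    (D : V →ₗ[ℝ] V)
    (hD : ∀ x y, ⟪D x, y⟫ = link x y)
    (hDsa : ∀ x y : V, ⟪D x, y⟫ = ⟪x, D y⟫)
    (X X' : ℝ → V)
    (hderiv : ∀ t, HasDerivAt X (X' t) t)
    (heuler : ∀ t, ∀ z : V, ⟪X' t, z⟫ = tri (X t) (D (X t)) z) :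
    ∀ s t : ℝ, ⟪X s, D (X s)⟫ = ⟪X t, D (X t)⟫ := by
  have key : ∀ t : ℝ, HasDerivAt (fun t => ⟪X t, D (X t)⟫) 0 t := by
    intro t
    have hDX : HasDerivAt (fun t => D (X t)) (D (X' t)) t :=
      (D.toContinuousLinearMap.hasFDerivAt.comp_hasDerivAt t (hderiv t))
    have h := (hderiv t).inner ℝ hDX
    have h0 : ⟪X' t, D (X t)⟫ = 0 := by
      have := heuler t (D (X t))
      have halt : tri (X t) (D (X t)) (D (X t)) = 0 := by
        have := htri₂ (X t) (D (X t)) (D (X t)); linarith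
      rw [this, halt]
    have h1 : ⟪X t, D (X' t)⟫ = 0 := by
      rw [← hDsa, real_inner_comm, h0]
    simpa [h0, h1] using h
  intro s t
  have : ∀ u : ℝ, ⟪X u, D (X u)⟫ = ⟪X 0, D (X 0)⟫ := by
    intro u
    have := (is_const_of_deriv_eq_zero (f := fun t => ⟪X t, D (X t)⟫)
      (fun t => (key t).differentiableAt) (fun t => (key t).deriv)) u 0
    simpa using this
  rw [this s, this t]
end

section
/- Any solution X(t) of the Euler equation of a finite-dimensional fluid algebra with initial condition X(0) = X₀ exists for all time (no finite-time blowup), and remains in the intersection of the energy sphere {Y : (Y,Y) = (X₀,X₀)} with the helicity level set {Y : (Y,DY) = (X₀,DX₀)}. -/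
open scoped RealInnerProductSpace

/-- Global existence for the Euler ODE of a finite-dimensional fluid algebra:
for any initial condition `X₀` there is a solution `X(t)` defined for all time,
which stays on the intersection of the energy sphere with the helicity level set. -/
theorem euler_global_existence
    {V : Type*} [NormedAddCommGroup V] [InnerProductSpace ℝ V] [FiniteDimensional ℝ V]
    (tri : V →ₗ[ℝ] V →ₗ[ℝ] V →ₗ[ℝ] ℝ)
    (htri₁ : ∀ x y z, tri x y z = - tri y x z)
    (htri₂ : ∀ x y z, tri x y z = - tri x z y)
    (link : V →ₗ[ℝ] V →ₗ[ℝ] ℝ)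
    (hsymm : ∀ x y, link x y = link y x)
    (hnondeg : ∀ x, (∀ y, link x y = 0) → x = 0)
    (D : V →ₗ[ℝ] V)
    (hD : ∀ x y, ⟪D x, y⟫ = link x y)
    (E : V → V)
    (hE : ∀ x z : V, ⟪E x, z⟫ = tri x (D x) z)
    (X₀ : V) :
    ∃ X : ℝ → V, X 0 = X₀ ∧ (∀ t, HasDerivAt X (E (X t)) t) ∧
      (∀ t, ⟪X t, X t⟫ = ⟪X₀, X₀⟫) ∧ (∀ t, ⟪X t, D (X t)⟫ = ⟪X₀, D X₀⟫) := by
  classical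
  set R : ℝ := ‖X₀‖ with hRdef
  -- Riesz representation as a linear map
  let r : (V →ₗ[ℝ] ℝ) →ₗ[ℝ] V :=
    ((InnerProductSpace.toDual ℝ V).symm.toLinearEquiv.toLinearMap).comp
      (LinearMap.toContinuousLinearMap : (V →ₗ[ℝ] ℝ) ≃ₗ[ℝ] (V →L[ℝ] ℝ)).toLinearMap
  have hr : ∀ (f : V →ₗ[ℝ] ℝ) (z : V), ⟪r f, z⟫ = f z := by
    intro f z
    simp [r, InnerProductSpace.toDual_symm_apply]
  -- bilinear representation of E
  let Bl : V →ₗ[ℝ] V →ₗ[ℝ] V := (tri.compl₂ D).compr₂ r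
  have hBl : ∀ x y z : V, ⟪Bl x y, z⟫ = tri x (D y) z := by
    intro x y z; simp [Bl, hr]
  have hEB : ∀ x, E x = Bl x x := by
    intro x
    apply ext_inner_right ℝ
    intro z
    rw [hE, hBl]
  -- continuity/smoothness of the quadratic map
  let Bc : V →L[ℝ] V →L[ℝ] V :=
    LinearMap.toContinuousLinearMap
      { toFun := fun x => LinearMap.toContinuousLinearMap (Bl x),
        map_add' := by intro x y; ext z; simp,
        map_smul' := by intro c x; ext z; simp }
  have hBc : ∀ x y, Bc x y = Bl x y := fun x y => rfl
  have hEsmooth : ContDiff ℝ 1 (fun x : V => Bl x x) := by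
    have h1 : ContDiff ℝ 1 (fun p : V × V => Bc p.1 p.2) :=
      Bc.isBoundedBilinearMap.contDiff
    have h2 := h1.comp (ContDiff.prodMk (contDiff_id (E := V)) contDiff_id)
    simpa [hBc, Function.comp_def] using h2
  -- smooth cutoff
  let ψ : ℝ → ℝ := fun s => Real.smoothTransition (2 - s / (R ^ 2 + 1))
  have hRsq : (0:ℝ) < R ^ 2 + 1 := by positivity
  have hψ1 : ∀ s : ℝ, s ≤ R ^ 2 → ψ s = 1 := by
    intro s hs
    apply Real.smoothTransition.one_of_one_le
    rw [le_sub_iff_add_le]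
    have h1 : s / (R ^ 2 + 1) ≤ 1 := by
      rw [div_le_one hRsq]; linarith
    linarith
  have hψ0 : ∀ s : ℝ, 2 * (R ^ 2 + 1) ≤ s → ψ s = 0 := by
    intro s hs
    apply Real.smoothTransition.zero_of_nonpos
    have h1 : (2:ℝ) ≤ s / (R ^ 2 + 1) := by
      rw [le_div_iff₀ hRsq]; linarith
    linarith
  have hψc : ContDiff ℝ 1 ψ := by
    have h := Real.smoothTransition.contDiff (n := 1) |>.comp
      ((contDiff_const (c := (2:ℝ))).sub ((contDiff_id (E := ℝ)).div_const (R ^ 2 + 1)))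
    simpa [Function.comp_def] using h
  -- the truncated vector field
  let F : V → V := fun x => ψ (‖x‖ ^ 2) • Bl x x
  have hFE : ∀ x : V, ‖x‖ ^ 2 ≤ R ^ 2 → F x = E x := by
    intro x hx
    show ψ (‖x‖ ^ 2) • Bl x x = E x
    rw [hψ1 _ hx, one_smul, hEB]
  have hnormsq : ContDiff ℝ 1 (fun x : V => ‖x‖ ^ 2) := by
    exact_mod_cast contDiff_norm_sq ℝ (n := 1)
  have hFc : ContDiff ℝ 1 F :=
    ((hψc.comp hnormsq).smul hEsmooth)
  have hFsupp : HasCompactSupport F := by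
    apply HasCompactSupport.intro (isCompact_closedBall (0:V) (Real.sqrt (2 * (R ^ 2 + 1))))
    intro x hx
    have hx' : Real.sqrt (2 * (R ^ 2 + 1)) < ‖x‖ := by
      simpa [Metric.mem_closedBall, dist_zero_right, not_le] using hx
    have h0 : (0:ℝ) ≤ Real.sqrt (2 * (R ^ 2 + 1)) := Real.sqrt_nonneg _
    have h1 : 2 * (R ^ 2 + 1) ≤ ‖x‖ ^ 2 := by
      have := mul_self_lt_mul_self h0 hx'
      have h2 : Real.sqrt (2 * (R ^ 2 + 1)) * Real.sqrt (2 * (R ^ 2 + 1)) = 2 * (R ^ 2 + 1) :=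
        Real.mul_self_sqrt (by positivity)
      nlinarith
    show ψ (‖x‖ ^ 2) • Bl x x = 0
    rw [hψ0 _ h1, zero_smul]
  obtain ⟨K, hK⟩ := ContDiff.lipschitzWith_of_hasCompactSupport hFsupp hFc one_ne_zero
  obtain ⟨C₀, hC₀⟩ := hFsupp.exists_bound_of_continuous hFc.continuous
  set C : ℝ := max C₀ 0 with hCdef
  have hC : ∀ x, ‖F x‖ ≤ C := fun x => le_trans (hC₀ x) (le_max_left _ _)
  have hC0 : 0 ≤ C := le_max_right _ _
  -- local solutions on each interval [-(n+1), n+1]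
  have hsol : ∀ n : ℕ, ∃ f : ℝ → V, f 0 = X₀ ∧
      ∀ t ∈ Set.Ioo (-((n:ℝ)+1)) ((n:ℝ)+1), HasDerivAt f (F (f t)) t := by
    intro n
    set T : ℝ := (n : ℝ) + 1 with hTdef
    have hT : 0 < T := by positivity
    have hpl : IsPicardLindelof (fun _ x => F x) (tmin := -T) (tmax := T) ⟨0, by linarith, hT.le⟩
        X₀ ⟨C * T, by positivity⟩ 0 ⟨C, hC0⟩ K :=
      IsPicardLindelof.of_time_independent (fun x _ => hC x) hK.lipschitzOnWith (by simp; exact le_refl _)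
    obtain ⟨f, hf0, hf⟩ := hpl.exists_eq_forall_mem_Icc_hasDerivWithinAt₀
    refine ⟨f, hf0, fun t ht => ?_⟩
    exact (hf t (Set.mem_Icc_of_Ioo ht)).hasDerivAt (Icc_mem_nhds ht.1 ht.2)
  choose sol hsol0 hsolD using hsol
  -- uniqueness: solutions agree on overlaps
  have huniq : ∀ (m n : ℕ) (t : ℝ), t ∈ Set.Ioo (-((m:ℝ)+1)) ((m:ℝ)+1) →
      t ∈ Set.Ioo (-((n:ℝ)+1)) ((n:ℝ)+1) → sol m t = sol n t := by
    intro m n t htm htn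
    set c : ℝ := min ((m:ℝ)+1) ((n:ℝ)+1) with hcdef
    have hc : 0 < c := lt_min (by positivity) (by positivity)
    have hsubm : Set.Ioo (-c) c ⊆ Set.Ioo (-((m:ℝ)+1)) ((m:ℝ)+1) :=
      Set.Ioo_subset_Ioo (neg_le_neg (min_le_left _ _)) (min_le_left _ _)
    have hsubn : Set.Ioo (-c) c ⊆ Set.Ioo (-((n:ℝ)+1)) ((n:ℝ)+1) :=
      Set.Ioo_subset_Ioo (neg_le_neg (min_le_right _ _)) (min_le_right _ _)
    have htc : t ∈ Set.Ioo (-c) c := by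
      constructor
      · rcases min_cases ((m:ℝ)+1) ((n:ℝ)+1) with ⟨h, _⟩ | ⟨h, _⟩ <;> rw [hcdef, h]
        · exact htm.1
        · exact htn.1
      · exact lt_min htm.2 htn.2
    have h0c : (0:ℝ) ∈ Set.Ioo (-c) c := ⟨neg_lt_zero.mpr hc, hc⟩
    exact ODE_solution_unique_of_mem_Ioo
      (v := fun _ x => F x) (s := fun _ => Set.univ)
      (fun _ _ => hK.lipschitzOnWith) h0c
      (fun t' ht' => ⟨hsolD m t' (hsubm ht'), trivial⟩)
      (fun t' ht' => ⟨hsolD n t' (hsubn ht'), trivial⟩)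
      ((hsol0 m).trans (hsol0 n).symm) htc
  -- the global solution
  let X : ℝ → V := fun t => sol ⌈|t|⌉₊ t
  have hmem : ∀ t : ℝ, t ∈ Set.Ioo (-((⌈|t|⌉₊ : ℝ)+1)) ((⌈|t|⌉₊ : ℝ)+1) := by
    intro t
    have h1 : |t| ≤ (⌈|t|⌉₊ : ℝ) := Nat.le_ceil _
    have h2 := neg_abs_le t
    have h3 := le_abs_self t
    exact ⟨by linarith, by linarith⟩
  have hXeq : ∀ (n : ℕ) (t : ℝ), t ∈ Set.Ioo (-((n:ℝ)+1)) ((n:ℝ)+1) → X t = sol n t :=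
    fun n t ht => huniq _ n t (hmem t) ht
  have hX0 : X 0 = X₀ := by
    have h := hXeq 0 0 ⟨by norm_num, by norm_num⟩
    rw [h, hsol0]
  have hXD : ∀ t, HasDerivAt X (F (X t)) t := by
    intro t
    have hnhds : Set.Ioo (-((⌈|t|⌉₊ : ℝ)+1)) ((⌈|t|⌉₊ : ℝ)+1) ∈ nhds t :=
      Ioo_mem_nhds (hmem t).1 (hmem t).2
    have hne : X =ᶠ[nhds t] sol ⌈|t|⌉₊ :=
      Filter.eventuallyEq_of_mem hnhds (fun s hs => hXeq _ s hs)
    have h1 := hsolD ⌈|t|⌉₊ t (hmem t)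
    have h2 := h1.congr_of_eventuallyEq hne
    rwa [hXeq _ t (hmem t)]
  -- orthogonality identities
  have horthE : ∀ x : V, ⟪E x, x⟫ = 0 := by
    intro x
    have h1 : tri x x (D x) = 0 := by have := htri₁ x x (D x); linarith
    rw [hE, htri₂, h1, neg_zero]
  have horthF : ∀ x : V, ⟪F x, x⟫ = 0 := by
    intro x
    show ⟪ψ (‖x‖ ^ 2) • Bl x x, x⟫ = 0
    rw [real_inner_smul_left, ← hEB, horthE, mul_zero]
  -- energy conservation
  have henergy : ∀ t, ⟪X t, X t⟫ = ⟪X₀, X₀⟫ := by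
    have hd : ∀ t, HasDerivAt (fun s => ⟪X s, X s⟫) 0 t := by
      intro t
      have h := HasDerivAt.inner ℝ (hXD t) (hXD t)
      have h1 := horthF (X t)
      have h2 : ⟪X t, F (X t)⟫ = 0 := by rw [real_inner_comm]; exact h1
      have hz : ⟪X t, F (X t)⟫ + ⟪F (X t), X t⟫ = 0 := by rw [h1, h2, add_zero]
      rwa [hz] at h
    intro t
    have hconst := is_const_of_deriv_eq_zero (𝕜 := ℝ)
      (fun s => (hd s).differentiableAt) (fun s => (hd s).deriv) t 0
    rwa [hX0] at hconst
  -- the solution stays in the ball where F = E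
  have hFX : ∀ t, F (X t) = E (X t) := by
    intro t
    apply hFE
    have h := henergy t
    rw [real_inner_self_eq_norm_sq, real_inner_self_eq_norm_sq] at h
    rw [h]
  have hXE : ∀ t, HasDerivAt X (E (X t)) t := fun t => hFX t ▸ hXD t
  -- helicity conservation
  have hDsym : ∀ x y : V, ⟪x, D y⟫ = ⟪D x, y⟫ := by
    intro x y
    rw [real_inner_comm, hD, hsymm, ← hD]
  have horthH : ∀ x : V, ⟪E x, D x⟫ = 0 := by
    intro x
    rw [hE]
    have := htri₂ x (D x) (D x); linarith
  have hhel : ∀ t, ⟪X t, D (X t)⟫ = ⟪X₀, D X₀⟫ := by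
    have hDX : ∀ t, HasDerivAt (fun s => D (X s)) (D (E (X t))) t := by
      intro t
      exact (D.toContinuousLinearMap.hasFDerivAt.comp_hasDerivAt t (hXE t))
    have hd : ∀ t, HasDerivAt (fun s => ⟪X s, D (X s)⟫) 0 t := by
      intro t
      have h := HasDerivAt.inner ℝ (hXE t) (hDX t)
      have h1 := horthH (X t)
      have h2 : ⟪X t, D (E (X t))⟫ = 0 := by
        rw [hDsym, real_inner_comm]; exact h1
      have hz : ⟪X t, D (E (X t))⟫ + ⟪E (X t), D (X t)⟫ = 0 := by rw [h1, h2, add_zero]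
      rwa [hz] at h
    intro t
    have hconst := is_const_of_deriv_eq_zero (𝕜 := ℝ)
      (fun s => (hd s).differentiableAt) (fun s => (hd s).deriv) t 0
    rwa [hX0] at hconst
  exact ⟨X, hX0, hXE, henergy, hhel⟩
end

section
/- If X(t) satisfies the Euler equation of a fluid algebra, then the vorticity Y(t) = DX(t) satisfies the transport equation dY/dt = T(X(t), Y(t)), i.e., the vorticity is transported by the motion. -/
open scoped RealInnerProductSpace

/-- If `X(t)` satisfies the Euler equation, then the vorticity `Y(t) = D X(t)`
satisfies the transport equation `dY/dt = T(X(t), Y(t))`. -/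
theorem vorticity_transported
    {V : Type*} [NormedAddCommGroup V] [InnerProductSpace ℝ V] [FiniteDimensional ℝ V]
    (tri : V →ₗ[ℝ] V →ₗ[ℝ] V →ₗ[ℝ] ℝ)
    (htri₁ : ∀ x y z, tri x y z = - tri y x z)
    (htri₂ : ∀ x y z, tri x y z = - tri x z y)
    (link : V →ₗ[ℝ] V →ₗ[ℝ] ℝ)
    (hsymm : ∀ x y, link x y = link y x)
    (hnondeg : ∀ x, (∀ y, link x y = 0) → x = 0)
    (D : V →ₗ[ℝ] V)
    (hD : ∀ x y, ⟪D x, y⟫ = link x y)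
    (hDsa : ∀ x y : V, ⟪D x, y⟫ = ⟪x, D y⟫)
    (T : V → V → V)
    (hT : ∀ x z w : V, ⟪T x z, w⟫ = tri x z (D w))
    (X X' : ℝ → V)
    (hderiv : ∀ t, HasDerivAt X (X' t) t)
    (heuler : ∀ t, ∀ z : V, ⟪X' t, z⟫ = tri (X t) (D (X t)) z) :
    ∀ t : ℝ, HasDerivAt (fun s => D (X s)) (T (X t) (D (X t))) t := by
  intro t
  have key : D (X' t) = T (X t) (D (X t)) := by
    apply ext_inner_right ℝ
    intro w
    rw [hDsa, heuler t (D w), hT]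
  have h := ((LinearMap.toContinuousLinearMap D).hasFDerivAt.comp_hasDerivAt t (hderiv t))
  simpa [key, Function.comp_def] using h
end

section
/- Suppose X(t) satisfies the Euler equation and Z(t) is a time-dependent field whose vorticity satisfies d(DZ(t))/dt = T(X(t), DZ(t)). Then the linking number ⟨X(t), Z(t)⟩ of the vorticities DZ(t) and DX(t) is constant in time (invariance of circulation). -/
open scoped RealInnerProductSpace

/-- Invariance of circulation: if `X(t)` satisfies the Euler equation and the
vorticity `D Z(t)` of a time-dependent field `Z(t)` is transported,
`d(DZ)/dt = T(X, DZ)`, then the linking number `(X, DZ) = ⟨X, Z⟩` of the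
vorticities `DZ` and `DX` is constant in time. -/
theorem circulation_invariance
    {V : Type*} [NormedAddCommGroup V] [InnerProductSpace ℝ V] [FiniteDimensional ℝ V]
    (tri : V →ₗ[ℝ] V →ₗ[ℝ] V →ₗ[ℝ] ℝ)
    (htri₁ : ∀ x y z, tri x y z = - tri y x z)
    (htri₂ : ∀ x y z, tri x y z = - tri x z y)
    (link : V →ₗ[ℝ] V →ₗ[ℝ] ℝ)
    (hsymm : ∀ x y, link x y = link y x)
    (hnondeg : ∀ x, (∀ y, link x y = 0) → x = 0)
    (D : V →ₗ[ℝ] V)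
    (hD : ∀ x y, ⟪D x, y⟫ = link x y)
    (hDsa : ∀ x y : V, ⟪D x, y⟫ = ⟪x, D y⟫)
    (T : V → V → V)
    (hT : ∀ x z w : V, ⟪T x z, w⟫ = tri x z (D w))
    (X X' Z : ℝ → V)
    (hderiv : ∀ t, HasDerivAt X (X' t) t)
    (heuler : ∀ t, ∀ w : V, ⟪X' t, w⟫ = tri (X t) (D (X t)) w)
    (htrans : ∀ t, HasDerivAt (fun s => D (Z s)) (T (X t) (D (Z t))) t) :
    ∀ s t : ℝ, ⟪X s, D (Z s)⟫ = ⟪X t, D (Z t)⟫ := by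
  intro s t
  have key : ∀ u : ℝ, HasDerivAt (fun r => ⟪X r, D (Z r)⟫) 0 u := by
    intro u
    have h := (hderiv u).inner ℝ (htrans u)
    have e1 : ⟪X u, T (X u) (D (Z u))⟫ = tri (X u) (D (Z u)) (D (X u)) := by
      rw [real_inner_comm, hT]
    have e2 : ⟪X' u, D (Z u)⟫ = tri (X u) (D (X u)) (D (Z u)) := heuler u _
    have : ⟪X u, T (X u) (D (Z u))⟫ + ⟪X' u, D (Z u)⟫ = 0 := by
      rw [e1, e2, htri₂ (X u) (D (X u)) (D (Z u))]; ring
    simpa [this] using h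
  have hc := is_const_of_deriv_eq_zero (f := fun r => ⟪X r, D (Z r)⟫)
    (fun u => (key u).differentiableAt) (fun u => (key u).deriv) s t
  exact hc
end

section
/- The Euler ODE is characterized by circulation invariance: if X(t) is a differentiable curve in V such that for every time-dependent field Z(t) whose vorticity is transported, d(DZ)/dt = T(X, DZ), the pairing (X(t), DZ(t)) is constant, then X(t) satisfies the Euler equation (dX/dt, W) = {X, DX, W} for all W. Conversely, solutions of the Euler equation have this invariance property. -/
open Set

open scoped RealInnerProductSpace NNReal

noncomputable section EulerAux

variable {E : Type*} [NormedAddCommGroup E] [NormedSpace ℝ E]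

/-- Radial truncation onto the closed ball of radius `c`. -/
def ballProj (c : ℝ) (x : E) : E := if ‖x‖ ≤ c then x else (c / ‖x‖) • x

lemma ballProj_of_le {c : ℝ} {x : E} (h : ‖x‖ ≤ c) : ballProj c x = x := if_pos h

lemma norm_ballProj_le_norm (c : ℝ) (hc : 0 ≤ c) (x : E) : ‖ballProj c x‖ ≤ ‖x‖ := by
  unfold ballProj
  split_ifs with h
  · exact le_rfl
  · push_neg at h
    have hx : 0 < ‖x‖ := lt_of_le_of_lt hc h
    rw [norm_smul, Real.norm_eq_abs, abs_of_nonneg (div_nonneg hc hx.le),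
      div_mul_cancel₀ _ hx.ne']
    exact h.le

lemma norm_ballProj_le (c : ℝ) (hc : 0 ≤ c) (x : E) : ‖ballProj c x‖ ≤ c := by
  unfold ballProj
  split_ifs with h
  · exact h
  · push_neg at h
    have hx : 0 < ‖x‖ := lt_of_le_of_lt hc h
    rw [norm_smul, Real.norm_eq_abs, abs_of_nonneg (div_nonneg hc hx.le),
      div_mul_cancel₀ _ hx.ne']

lemma ballProj_lip_aux (c : ℝ) (hc : 0 ≤ c) (x y : E) (hyx : ‖y‖ ≤ ‖x‖) :
    ‖ballProj c x - ballProj c y‖ ≤ 2 * ‖x - y‖ := by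
  have hnn : (0:ℝ) ≤ ‖x - y‖ := norm_nonneg _
  have hxy : ‖x‖ - ‖y‖ ≤ ‖x - y‖ := norm_sub_norm_le x y
  by_cases hx : ‖x‖ ≤ c
  · rw [ballProj_of_le hx, ballProj_of_le (hyx.trans hx)]
    linarith
  push_neg at hx
  have hx0 : 0 < ‖x‖ := lt_of_le_of_lt hc hx
  have hs0 : 0 ≤ c / ‖x‖ := div_nonneg hc hx0.le
  have hs1 : c / ‖x‖ ≤ 1 := by rw [div_le_one hx0]; exact hx.le
  have e2 : c / ‖x‖ * ‖x‖ = c := div_mul_cancel₀ _ hx0.ne'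
  have h1 : ‖(c / ‖x‖) • (x - y)‖ ≤ ‖x - y‖ := by
    rw [norm_smul, Real.norm_eq_abs, abs_of_nonneg hs0]
    exact mul_le_of_le_one_left hnn hs1
  by_cases hy : ‖y‖ ≤ c
  · rw [ballProj, if_neg (not_le.mpr hx), ballProj_of_le hy]
    have hdecomp : (c / ‖x‖) • x - y = (c / ‖x‖) • (x - y) + ((c / ‖x‖ - 1) • y) := by
      rw [smul_sub, sub_smul, one_smul]; abel
    rw [hdecomp]
    have h2 : ‖(c / ‖x‖ - 1) • y‖ ≤ ‖x - y‖ := by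
      rw [norm_smul, Real.norm_eq_abs, abs_of_nonpos (by linarith)]
      nlinarith [mul_nonneg (by linarith : (0:ℝ) ≤ 1 - c / ‖x‖) (by linarith : (0:ℝ) ≤ c - ‖y‖),
        mul_nonneg (by linarith : (0:ℝ) ≤ 1 - c / ‖x‖) (by linarith : (0:ℝ) ≤ ‖x‖ - c)]
    calc ‖(c / ‖x‖) • (x - y) + (c / ‖x‖ - 1) • y‖
        ≤ ‖(c / ‖x‖) • (x - y)‖ + ‖(c / ‖x‖ - 1) • y‖ := norm_add_le _ _
      _ ≤ 2 * ‖x - y‖ := by linarith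
  · push_neg at hy
    have hy0 : 0 < ‖y‖ := lt_of_le_of_lt hc hy
    have e1 : c / ‖y‖ * ‖y‖ = c := div_mul_cancel₀ _ hy0.ne'
    have hsr : c / ‖x‖ ≤ c / ‖y‖ := by gcongr
    rw [ballProj, if_neg (not_le.mpr hx), ballProj, if_neg (not_le.mpr hy)]
    have hdecomp : (c / ‖x‖) • x - (c / ‖y‖) • y
        = (c / ‖x‖) • (x - y) + ((c / ‖x‖ - c / ‖y‖) • y) := by
      rw [smul_sub, sub_smul]; abel
    rw [hdecomp]
    have h2 : ‖(c / ‖x‖ - c / ‖y‖) • y‖ ≤ ‖x - y‖ := by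
      rw [norm_smul, Real.norm_eq_abs, abs_of_nonpos (by linarith)]
      nlinarith [mul_nonneg (by linarith : (0:ℝ) ≤ 1 - c / ‖x‖)
        (by linarith : (0:ℝ) ≤ ‖x‖ - ‖y‖)]
    calc ‖(c / ‖x‖) • (x - y) + (c / ‖x‖ - c / ‖y‖) • y‖
        ≤ ‖(c / ‖x‖) • (x - y)‖ + ‖(c / ‖x‖ - c / ‖y‖) • y‖ := norm_add_le _ _
      _ ≤ 2 * ‖x - y‖ := by linarith

lemma lipschitzWith_ballProj (c : ℝ) (hc : 0 ≤ c) :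
    LipschitzWith 2 (ballProj c : E → E) := by
  apply LipschitzWith.of_dist_le_mul
  intro x y
  rw [dist_eq_norm, dist_eq_norm]
  rcases le_total ‖y‖ ‖x‖ with h | h
  · simpa using ballProj_lip_aux c hc x y h
  · rw [norm_sub_rev, norm_sub_rev x y]
    simpa using ballProj_lip_aux c hc y x h


lemma linear_ode_right [CompleteSpace E] (A : ℝ → E →L[ℝ] E) (hA : Continuous A)
    {t₀ b : ℝ} (hb : t₀ ≤ b) (v : E) :
    ∃ y : ℝ → E, y t₀ = v ∧ ∀ t ∈ Icc t₀ b, HasDerivWithinAt y (A t (y t)) (Icc t₀ b) t := by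
  obtain ⟨M₀, hM₀⟩ :=
    (isCompact_Icc (a := t₀) (b := b)).exists_bound_of_continuousOn hA.continuousOn
  set M : ℝ := max M₀ 0 with hMdef
  have hM : 0 ≤ M := le_max_right _ _
  have hMA : ∀ t ∈ Icc t₀ b, ‖A t‖ ≤ M := fun t ht => (hM₀ t ht).trans (le_max_left _ _)
  set B : ℝ := (‖v‖ + 1) * Real.exp (M * (b - t₀)) with hBdef
  have hexp1 : 1 ≤ Real.exp (M * (b - t₀)) :=
    Real.one_le_exp (by nlinarith : (0:ℝ) ≤ M * (b - t₀))
  have hB1 : ‖v‖ + 1 ≤ B := by nlinarith [norm_nonneg v]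
  have hB : 0 ≤ B := by nlinarith [norm_nonneg v]
  set w : ℝ → E → E := fun t x => A t (ballProj B x) with hwdef
  have hnormle : ∀ t ∈ Icc t₀ b, ∀ x : E, ‖w t x‖ ≤ M * B := by
    intro t ht x
    exact ((A t).le_opNorm _).trans
      (mul_le_mul (hMA t ht) (norm_ballProj_le B hB x) (norm_nonneg _) hM)
  have hpl : IsPicardLindelof w (⟨t₀, le_rfl, hb⟩ : Icc t₀ b) v (M * B * (b - t₀)).toNNReal 0
      (M * B).toNNReal (2 * M).toNNReal :=
    { lipschitzOnWith := by
        intro t ht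
        apply LipschitzWith.lipschitzOnWith
        have hcomp : LipschitzWith (‖A t‖₊ * 2) (w t) :=
          (A t).lipschitz.comp (lipschitzWith_ballProj B hB)
        apply hcomp.weaken
        rw [← NNReal.coe_le_coe]
        push_cast
        rw [Real.coe_toNNReal _ (by nlinarith)]
        have := hMA t ht
        linarith
      continuousOn := fun x _ => (hA.clm_apply continuous_const).continuousOn
      norm_le := fun t ht x _ =>
        (hnormle t ht x).trans (le_of_eq (Real.coe_toNNReal _ (mul_nonneg hM hB)).symm)
      mul_max_le := by
        show ((M * B).toNNReal : ℝ) * max (b - t₀) (t₀ - t₀)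
          ≤ ((M * B * (b - t₀)).toNNReal : ℝ) - ((0 : ℝ≥0) : ℝ)
        rw [Real.coe_toNNReal _ (mul_nonneg hM hB),
          Real.coe_toNNReal _ (mul_nonneg (mul_nonneg hM hB) (by linarith)), sub_self,
          max_eq_left (by linarith : (0:ℝ) ≤ b - t₀), NNReal.coe_zero, sub_zero] }
  obtain ⟨f, hf0', hf⟩ := hpl.exists_eq_forall_mem_Icc_hasDerivWithinAt₀
  have hf0 : f t₀ = v := hf0'
  have hcont : ContinuousOn f (Icc t₀ b) := fun t ht => (hf t ht).continuousWithinAt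
  have hder : ∀ t ∈ Ico t₀ b, HasDerivWithinAt f (w t (f t)) (Ici t) t := fun t ht =>
    (hf t (Ico_subset_Icc_self ht)).mono_of_mem_nhdsWithin (Icc_mem_nhdsGE_of_mem ht)
  have hbound : ∀ t ∈ Ico t₀ b, ‖w t (f t)‖ ≤ M * ‖f t‖ + 0 := by
    intro t ht
    rw [add_zero]
    exact ((A t).le_opNorm _).trans
      (mul_le_mul (hMA t (Ico_subset_Icc_self ht)) (norm_ballProj_le_norm B hB _)
        (norm_nonneg _) hM)
  have hgron := norm_le_gronwallBound_of_norm_deriv_right_le hcont hder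
    (le_of_eq (by rw [hf0]) : ‖f t₀‖ ≤ ‖v‖) hbound
  have hfB : ∀ t ∈ Icc t₀ b, ‖f t‖ ≤ B := by
    intro t ht
    have h1 := hgron t ht
    rw [gronwallBound_ε0] at h1
    have h2 : Real.exp (M * (t - t₀)) ≤ Real.exp (M * (b - t₀)) :=
      Real.exp_le_exp.mpr (by nlinarith [ht.2])
    have h3 : ‖v‖ * Real.exp (M * (t - t₀)) ≤ (‖v‖ + 1) * Real.exp (M * (b - t₀)) := by
      nlinarith [norm_nonneg v, Real.exp_pos (M * (t - t₀))]
    exact h1.trans h3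
  refine ⟨f, hf0, fun t ht => ?_⟩
  have := hf t ht
  simp only [hwdef] at this
  rwa [ballProj_of_le (hfB t ht)] at this

lemma linear_ode_left [CompleteSpace E] (A : ℝ → E →L[ℝ] E) (hA : Continuous A)
    {a t₀ : ℝ} (ha : a ≤ t₀) (v : E) :
    ∃ z : ℝ → E, z t₀ = v ∧ ∀ t ∈ Icc a t₀, HasDerivWithinAt z (A t (z t)) (Icc a t₀) t := by
  have hcont2 : Continuous fun s : ℝ => -(A (2 * t₀ - s)) :=
    (hA.comp (by continuity)).neg
  obtain ⟨y, hy0, hy⟩ := linear_ode_right (fun s => -(A (2 * t₀ - s))) hcont2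
    (show t₀ ≤ 2 * t₀ - a by linarith) v
  have ht₀ : (2 : ℝ) * t₀ - t₀ = t₀ := by ring
  refine ⟨fun t => y (2 * t₀ - t), by show y (2 * t₀ - t₀) = v; rw [ht₀]; exact hy0, fun t ht => ?_⟩
  have hσ : HasDerivWithinAt (fun t : ℝ => 2 * t₀ - t) (-1) (Icc a t₀) t := by
    simpa using ((hasDerivAt_id t).const_sub (2 * t₀)).hasDerivWithinAt
  have hmem : 2 * t₀ - t ∈ Icc t₀ (2 * t₀ - a) := ⟨by linarith [ht.2], by linarith [ht.1]⟩
  have hmaps : MapsTo (fun t : ℝ => 2 * t₀ - t) (Icc a t₀) (Icc t₀ (2 * t₀ - a)) := by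
    intro s hs
    simp only [mem_Icc] at *
    constructor <;> linarith [hs.1, hs.2]
  have hcomp := (hy _ hmem).scomp t hσ hmaps
  have harg : (2 : ℝ) * t₀ - (2 * t₀ - t) = t := by ring
  rw [harg] at hcomp
  simpa [Function.comp_def] using hcomp

lemma linear_ode_glue [CompleteSpace E] (A : ℝ → E →L[ℝ] E)
    {a t₀ b : ℝ} (ha : a ≤ t₀) (hb : t₀ ≤ b) {z y : ℝ → E}
    (hz : ∀ t ∈ Icc a t₀, HasDerivWithinAt z (A t (z t)) (Icc a t₀) t)
    (hy : ∀ t ∈ Icc t₀ b, HasDerivWithinAt y (A t (y t)) (Icc t₀ b) t)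
    (hzy : z t₀ = y t₀) :
    ∃ F : ℝ → E, F t₀ = z t₀ ∧ ∀ t ∈ Icc a b, HasDerivWithinAt F (A t (F t)) (Icc a b) t := by
  classical
  set F : ℝ → E := fun t => if t ≤ t₀ then z t else y t with hFdef
  have hFz : ∀ s ∈ Icc a t₀, F s = z s := fun s hs => if_pos hs.2
  have hFy : ∀ s ∈ Icc t₀ b, F s = y s := by
    intro s hs
    by_cases h : s ≤ t₀
    · have hst : s = t₀ := le_antisymm h hs.1
      rw [hst]
      simp only [hFdef]
      rw [if_pos le_rfl]
      exact hzy
    · simp only [hFdef, if_neg h]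
  refine ⟨F, if_pos le_rfl, fun t ht => ?_⟩
  have h1 : HasDerivWithinAt F (A t (F t)) (Icc a t₀) t := by
    by_cases h : t ∈ Icc a t₀
    · rw [hFz t h]
      exact (hz t h).congr hFz (hFz t h)
    · exact hasDerivWithinAt_iff_hasFDerivWithinAt.mpr
        (HasFDerivWithinAt.of_notMem_closure (by rwa [isClosed_Icc.closure_eq]))
  have h2 : HasDerivWithinAt F (A t (F t)) (Icc t₀ b) t := by
    by_cases h : t ∈ Icc t₀ b
    · rw [hFy t h]
      exact (hy t h).congr hFy (hFy t h)
    · exact hasDerivWithinAt_iff_hasFDerivWithinAt.mpr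
        (HasFDerivWithinAt.of_notMem_closure (by rwa [isClosed_Icc.closure_eq]))
  have := h1.union h2
  rwa [Icc_union_Icc_eq_Icc ha hb] at this

lemma linear_ode_Icc [CompleteSpace E] (A : ℝ → E →L[ℝ] E) (hA : Continuous A)
    {a t₀ b : ℝ} (ha : a ≤ t₀) (hb : t₀ ≤ b) (v : E) :
    ∃ g : ℝ → E, g t₀ = v ∧ ∀ t ∈ Icc a b, HasDerivWithinAt g (A t (g t)) (Icc a b) t := by
  obtain ⟨z, hz0, hz⟩ := linear_ode_left A hA ha v
  obtain ⟨y, hy0, hy⟩ := linear_ode_right A hA hb v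
  obtain ⟨F, hF0, hF⟩ := linear_ode_glue A ha hb hz hy (by rw [hz0, hy0])
  exact ⟨F, by rw [hF0, hz0], hF⟩

lemma linear_ode_global [FiniteDimensional ℝ E] (A : ℝ → E →L[ℝ] E) (hA : Continuous A)
    (t₀ : ℝ) (v : E) :
    ∃ y : ℝ → E, y t₀ = v ∧ ∀ t, HasDerivAt y (A t (y t)) t := by
  have key : ∀ n : ℕ, ∃ g : ℝ → E, g t₀ = v ∧
      ∀ t ∈ Icc (t₀ - ((n:ℝ) + 1)) (t₀ + ((n:ℝ) + 1)),
        HasDerivWithinAt g (A t (g t)) (Icc (t₀ - ((n:ℝ) + 1)) (t₀ + ((n:ℝ) + 1))) t := by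
    intro n
    have hn : (0:ℝ) ≤ (n:ℝ) := Nat.cast_nonneg n
    exact linear_ode_Icc A hA (by linarith) (by linarith) v
  choose g hg0 hg using key
  have hgd : ∀ n : ℕ, ∀ t ∈ Ioo (t₀ - ((n:ℝ) + 1)) (t₀ + ((n:ℝ) + 1)),
      HasDerivAt (g n) (A t (g n t)) t := fun n t ht =>
    (hg n t (Ioo_subset_Icc_self ht)).hasDerivAt (Icc_mem_nhds ht.1 ht.2)
  -- consistency of the solutions
  have hcons : ∀ n m : ℕ, ∀ s : ℝ, s ∈ Ioo (t₀ - ((n:ℝ) + 1)) (t₀ + ((n:ℝ) + 1)) →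
      s ∈ Ioo (t₀ - ((m:ℝ) + 1)) (t₀ + ((m:ℝ) + 1)) → g n s = g m s := by
    intro n m s hsn hsm
    set c : ℝ := min ((n:ℝ) + 1) ((m:ℝ) + 1) with hcdef
    have hc0 : 0 < c := lt_min (by positivity) (by positivity)
    have hcn : c ≤ (n:ℝ) + 1 := min_le_left _ _
    have hcm : c ≤ (m:ℝ) + 1 := min_le_right _ _
    have hsc : s ∈ Ioo (t₀ - c) (t₀ + c) := by
      have h1 : t₀ - s < c := lt_min (by linarith [hsn.1]) (by linarith [hsm.1])
      have h2 : s - t₀ < c := lt_min (by linarith [hsn.2]) (by linarith [hsm.2])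
      exact ⟨by linarith, by linarith⟩
    obtain ⟨M₀, hM₀⟩ := (isCompact_Icc (a := t₀ - c) (b := t₀ + c)).exists_bound_of_continuousOn
      hA.continuousOn
    set M : ℝ := max M₀ 0 with hMdef
    have hM : 0 ≤ M := le_max_right _ _
    have hMA : ∀ t ∈ Icc (t₀ - c) (t₀ + c), ‖A t‖ ≤ M := fun t ht =>
      (hM₀ t ht).trans (le_max_left _ _)
    set cl : ℝ → ℝ := fun t => min (t₀ + c) (max (t₀ - c) t) with hcldef
    have hclmem : ∀ t, cl t ∈ Icc (t₀ - c) (t₀ + c) := by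
      intro t
      constructor
      · exact le_min (by linarith) (le_max_left _ _)
      · exact min_le_left _ _
    have hcleq : ∀ t ∈ Ioo (t₀ - c) (t₀ + c), cl t = t := by
      intro t ht
      simp only [hcldef]
      rw [max_eq_right ht.1.le, min_eq_right ht.2.le]
    set w : ℝ → E → E := fun t x => A (cl t) x with hwdef
    have hlip : ∀ t : ℝ, LipschitzOnWith M.toNNReal (w t) univ := by
      intro t
      apply LipschitzWith.lipschitzOnWith
      apply (A (cl t)).lipschitz.weaken
      rw [← NNReal.coe_le_coe]
      rw [Real.coe_toNNReal _ hM]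
      exact hMA _ (hclmem t)
    have hfm : ∀ p : ℕ, c ≤ (p:ℝ) + 1 → ∀ t ∈ Ioo (t₀ - c) (t₀ + c),
        HasDerivAt (g p) (w t (g p t)) t ∧ g p t ∈ (univ : Set E) := by
      intro p hp t ht
      refine ⟨?_, mem_univ _⟩
      have hwt : w t (g p t) = A t (g p t) := by
        simp only [hwdef]
        rw [hcleq t ht]
      rw [hwt]
      exact hgd p t ⟨by linarith [ht.1], by linarith [ht.2]⟩
    have huniq := ODE_solution_unique_of_mem_Ioo (v := w) (s := fun _ => (univ : Set E))
      (fun t _ => hlip t) (t₀ := t₀) (a := t₀ - c) (b := t₀ + c) (f := g n) (g := g m)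
      ⟨by linarith, by linarith⟩ (hfm n hcn) (hfm m hcm) (by rw [hg0, hg0])
    exact huniq hsc
  -- assemble the global solution
  refine ⟨fun t => g ⌊|t - t₀|⌋₊ t, ?_, ?_⟩
  · simp only [sub_self, abs_zero, Nat.floor_zero]
    exact hg0 0
  · intro t
    set n : ℕ := ⌊|t - t₀|⌋₊ with hndef
    have htn : t ∈ Ioo (t₀ - ((n:ℝ) + 1)) (t₀ + ((n:ℝ) + 1)) := by
      have h1 : |t - t₀| < (n:ℝ) + 1 := by
        have := Nat.lt_floor_add_one |t - t₀|
        push_cast at this ⊢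
        linarith
      rw [abs_lt] at h1
      constructor <;> [linarith [h1.1]; linarith [h1.2]]
    have hEq : (fun s => g ⌊|s - t₀|⌋₊ s) =ᶠ[nhds t] g n := by
      filter_upwards [isOpen_Ioo.mem_nhds htn] with s hs
      have hsm : s ∈ Ioo (t₀ - ((⌊|s - t₀|⌋₊ : ℝ) + 1)) (t₀ + ((⌊|s - t₀|⌋₊ : ℝ) + 1)) := by
        have h1 : |s - t₀| < (⌊|s - t₀|⌋₊ : ℝ) + 1 := by
          have := Nat.lt_floor_add_one |s - t₀|
          push_cast at this ⊢
          linarith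
        rw [abs_lt] at h1
        constructor <;> [linarith [h1.1]; linarith [h1.2]]
      exact hcons _ n s hsm hs
    have hEqt : g ⌊|t - t₀|⌋₊ t = g n t := rfl
    have hd := (hgd n t htn).congr_of_eventuallyEq hEq
    rwa [← hEqt] at hd
end EulerAux

/-- The Euler ODE is characterized by circulation invariance: a differentiable curve
`X(t)` satisfies the Euler equation `(dX/dt, W) = {X, DX, W}` if and only if for every
time-dependent field `Z(t)` whose vorticity is transported, `d(DZ)/dt = T(X, DZ)`,
the pairing `(X(t), D Z(t))` is constant in time. -/
theorem euler_characterized_by_circulation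
    {V : Type*} [NormedAddCommGroup V] [InnerProductSpace ℝ V] [FiniteDimensional ℝ V]
    (tri : V →ₗ[ℝ] V →ₗ[ℝ] V →ₗ[ℝ] ℝ)
    (htri₁ : ∀ x y z, tri x y z = - tri y x z)
    (htri₂ : ∀ x y z, tri x y z = - tri x z y)
    (link : V →ₗ[ℝ] V →ₗ[ℝ] ℝ)
    (hsymm : ∀ x y, link x y = link y x)
    (hnondeg : ∀ x, (∀ y, link x y = 0) → x = 0)
    (D : V →ₗ[ℝ] V)
    (hD : ∀ x y, ⟪D x, y⟫ = link x y)
    (hDsa : ∀ x y : V, ⟪D x, y⟫ = ⟪x, D y⟫)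
    (hDbij : Function.Bijective D)
    (T : V → V → V)
    (hT : ∀ x z w : V, ⟪T x z, w⟫ = tri x z (D w))
    (X X' : ℝ → V)
    (hderiv : ∀ t, HasDerivAt X (X' t) t) :
    (∀ Z : ℝ → V, (∀ t, HasDerivAt (fun s => D (Z s)) (T (X t) (D (Z t))) t) →
        ∀ s t : ℝ, ⟪X s, D (Z s)⟫ = ⟪X t, D (Z t)⟫) ↔
      (∀ t, ∀ w : V, ⟪X' t, w⟫ = tri (X t) (D (X t)) w) := by
  classical
  -- `T` is bilinear
  have hTadd₁ : ∀ x x' z : V, T (x + x') z = T x z + T x' z := fun x x' z =>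
    ext_inner_right ℝ fun w => by
      simp [hT, inner_add_left]
  have hTsmul₁ : ∀ (c : ℝ) (x z : V), T (c • x) z = c • T x z := fun c x z =>
    ext_inner_right ℝ fun w => by
      simp [hT, real_inner_smul_left]
  have hTadd₂ : ∀ x z z' : V, T x (z + z') = T x z + T x z' := fun x z z' =>
    ext_inner_right ℝ fun w => by
      simp [hT, inner_add_left]
  have hTsmul₂ : ∀ (c : ℝ) (x z : V), T x (c • z) = c • T x z := fun c x z =>
    ext_inner_right ℝ fun w => by
      simp [hT, real_inner_smul_left]
  set TL : V →ₗ[ℝ] V →ₗ[ℝ] V :=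
    LinearMap.mk₂ ℝ T hTadd₁ hTsmul₁ hTadd₂ hTsmul₂ with hTLdef
  set N : V →ₗ[ℝ] (V →L[ℝ] V) :=
    (LinearMap.toContinuousLinearMap : (V →ₗ[ℝ] V) ≃ₗ[ℝ] (V →L[ℝ] V)).toLinearMap ∘ₗ TL
    with hNdef
  have hXc : Continuous X := continuous_iff_continuousAt.mpr fun t => (hderiv t).continuousAt
  set A : ℝ → V →L[ℝ] V := fun t => N (X t) with hAdef
  have hA : Continuous A := N.continuous_of_finiteDimensional.comp hXc
  have hAapp : ∀ t z, A t z = T (X t) z := by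
    intro t z
    simp only [hAdef, hNdef, hTLdef, LinearMap.comp_apply, LinearEquiv.coe_coe,
      LinearMap.coe_toContinuousLinearMap', LinearMap.mk₂_apply]
  have hskew : ∀ x z : V, ⟪x, T x z⟫ = - tri x (D x) z := by
    intro x z
    rw [real_inner_comm, hT, htri₂]
  constructor
  · -- circulation invariance implies Euler
    intro hC t w
    obtain ⟨y, hy0, hy⟩ := linear_ode_global A hA t w
    set e : V ≃ₗ[ℝ] V := LinearEquiv.ofBijective D hDbij with hedef
    set Z : ℝ → V := fun s => e.symm (y s) with hZdef
    have hDZ : ∀ s, D (Z s) = y s := by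
      intro s
      have h1 := e.apply_symm_apply (y s)
      rwa [hedef, LinearEquiv.ofBijective_apply] at h1
    have hfun : (fun σ => D (Z σ)) = y := funext fun σ => hDZ σ
    have hZ : ∀ s, HasDerivAt (fun σ => D (Z σ)) (T (X s) (D (Z s))) s := by
      intro s
      rw [hfun, hDZ s, ← hAapp]
      exact hy s
    have hconst := hC Z hZ
    have hder1 : HasDerivAt (fun s => ⟪X s, D (Z s)⟫)
        (⟪X t, T (X t) (D (Z t))⟫ + ⟪X' t, D (Z t)⟫) t :=
      HasDerivAt.inner ℝ (hderiv t) (hZ t)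
    have hder0 : HasDerivAt (fun s => ⟪X s, D (Z s)⟫) 0 t := by
      have hcf : (fun s => ⟪X s, D (Z s)⟫) = fun _ => ⟪X t, D (Z t)⟫ :=
        funext fun s => hconst s t
      rw [hcf]
      exact hasDerivAt_const _ _
    have hzero := hder1.unique hder0
    have hw : D (Z t) = w := by rw [hDZ t, hy0]
    rw [hw] at hzero
    have hs := hskew (X t) w
    linarith
  · -- Euler implies circulation invariance
    intro hE Z hZ s t
    have key : ∀ u, HasDerivAt (fun σ => ⟪X σ, D (Z σ)⟫) 0 u := by
      intro u
      have h := HasDerivAt.inner ℝ (hderiv u) (hZ u)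
      have h2 : ⟪X u, T (X u) (D (Z u))⟫ + ⟪X' u, D (Z u)⟫ = 0 := by
        rw [hskew, hE u (D (Z u))]
        ring
      rwa [h2] at h
    exact is_const_of_deriv_eq_zero (fun u => (key u).differentiableAt)
      (fun u => (key u).deriv) s t
end
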